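/- Let φ and ϕ be right invariant fuzzy quasi-orders on a fuzzy automaton A with φ ≤ ϕ. Then the map ξ : A_φ → A_ϕ given by ξ(φ_u) = ϕ_u is a well-defined surjective homomorphism of crisp-deterministic fuzzy automata; in particular |A_ϕ| ≤ |A_φ|. -/
import Mathlib


namespace FuzzyAut

/-- Composition of fuzzy relations. -/
def rcomp {L : Type*} [CompleteLattice L] [CommMonoid L] {A B C : Type*}
    (α : A → B → L) (β : B → C → L) : A → C → L :=
  fun a c => ⨆ b, α a b * β b c

/-- Composition of a fuzzy set with a fuzzy relation. -/
def scomp {L : Type*} [CompleteLattice L] [CommMonoid L] {A B : Type*}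
    (f : A → L) (α : A → B → L) : B → L :=
  fun b => ⨆ a, f a * α a b

/-- Composition of a fuzzy relation with a fuzzy set. -/
def rscomp {L : Type*} [CompleteLattice L] [CommMonoid L] {A B : Type*}
    (α : A → B → L) (g : B → L) : A → L :=
  fun a => ⨆ b, α a b * g b

/-- Scalar composition of two fuzzy sets. -/
def sscomp {L : Type*} [CompleteLattice L] [CommMonoid L] {A : Type*}
    (f g : A → L) : L := ⨆ a, f a * g a

/-- The crisp equality fuzzy relation. -/
def eqRel {L : Type*} [CompleteLattice L] [CommMonoid L] (A : Type*) : A → A → L :=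
  fun a b => ⨆ _ : a = b, (1 : L)

/-- The fuzzy transition relation extended to words. -/
def relWord {L : Type*} [CompleteLattice L] [CommMonoid L] {A X : Type*}
    (δ : X → A → A → L) : List X → A → A → L
  | [] => eqRel A
  | x :: u => rcomp (δ x) (relWord δ u)

/-- The family φ_u : φ_ε = σ∘φ, φ_{ux} = φ_u∘δ_x∘φ. -/
def phiFam {L : Type*} [CompleteLattice L] [CommMonoid L] {A X : Type*}
    (σ : A → L) (δ : X → A → A → L) (φ : A → A → L) (u : List X) : A → L :=
  u.foldl (fun f x => scomp (scomp f (δ x)) φ) (scomp σ φ)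

/-- The family ψ^u : ψ^ε = ψ∘τ, ψ^{xu} = ψ∘δ_x∘ψ^u. -/
def psiFam {L : Type*} [CompleteLattice L] [CommMonoid L] {A X : Type*}
    (τ : A → L) (δ : X → A → A → L) (ψ : A → A → L) : List X → A → L
  | [] => rscomp ψ τ
  | x :: u => rscomp ψ (rscomp (δ x) (psiFam τ δ ψ u))

/-- Reflexivity of a fuzzy relation. -/
def IsRefl {L : Type*} [CompleteLattice L] [CommMonoid L] {A : Type*}
    (φ : A → A → L) : Prop := ∀ a, φ a a = 1

/-- Transitivity of a fuzzy relation. -/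
def IsTrans {L : Type*} [CompleteLattice L] [CommMonoid L] {A : Type*}
    (φ : A → A → L) : Prop := ∀ a b c, φ a b * φ b c ≤ φ a c

section Aux
variable {L : Type*} [CompleteLattice L] [CommMonoid L] {res : L → L → L}
variable (hres : ∀ x y z : L, x * y ≤ z ↔ x ≤ res y z)
include hres

lemma mul_le_r {a b c : L} (h : a ≤ b) : a * c ≤ b * c :=
  (hres a c (b * c)).mpr (h.trans ((hres b c (b * c)).mp le_rfl))

lemma mul_le_l {a b c : L} (h : a ≤ b) : c * a ≤ c * b := by
  rw [mul_comm c a, mul_comm c b]; exact mul_le_r hres h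

lemma iSup_mul' {ι : Sort*} (f : ι → L) (y : L) : (⨆ i, f i) * y = ⨆ i, f i * y := by
  apply le_antisymm
  · rw [hres]
    exact iSup_le fun i => (hres _ _ _).mp (le_iSup (fun i => f i * y) i)
  · exact iSup_le fun i => mul_le_r hres (le_iSup f i)

lemma mul_iSup' {ι : Sort*} (f : ι → L) (y : L) : y * (⨆ i, f i) = ⨆ i, y * f i := by
  rw [mul_comm, iSup_mul' hres]
  exact iSup_congr fun i => mul_comm _ _

lemma rcomp_assoc {A B C D : Type*} (α : A → B → L) (β : B → C → L) (γ : C → D → L) :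
    rcomp (rcomp α β) γ = rcomp α (rcomp β γ) := by
  funext a d
  simp only [rcomp, iSup_mul' hres, mul_iSup' hres, mul_assoc]
  exact iSup_comm

lemma scomp_assoc {A B C : Type*} (f : A → L) (α : A → B → L) (β : B → C → L) :
    scomp (scomp f α) β = scomp f (rcomp α β) := by
  funext c
  simp only [scomp, rcomp, iSup_mul' hres, mul_iSup' hres, mul_assoc]
  exact iSup_comm

lemma sscomp_scomp {A B : Type*} (f : A → L) (α : A → B → L) (g : B → L) :
    sscomp (scomp f α) g = sscomp f (rscomp α g) := by
  simp only [sscomp, scomp, rscomp, iSup_mul' hres, mul_iSup' hres, mul_assoc]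
  exact iSup_comm

lemma rcomp_mono {A B C : Type*} {α α' : A → B → L} {β β' : B → C → L}
    (h1 : α ≤ α') (h2 : β ≤ β') : rcomp α β ≤ rcomp α' β' := fun a c =>
  iSup_le fun b => le_trans (mul_le_r hres (h1 a b))
    (le_trans (mul_le_l hres (h2 b c)) (le_iSup (fun b => α' a b * β' b c) b))

omit hres in lemma le_rcomp_left {A B : Type*} {φ : A → A → L} (hrefl : IsRefl φ)
    (g : A → B → L) : g ≤ rcomp φ g := fun a b => by
  calc g a b = φ a a * g a b := by rw [hrefl a, one_mul]
    _ ≤ _ := le_iSup (fun c => φ a c * g c b) a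

lemma rcomp_absorb {A : Type*} {φ ϕ : A → A → L} (hrefl : IsRefl φ)
    (htrans : IsTrans ϕ) (hle : φ ≤ ϕ) : rcomp φ ϕ = ϕ := by
  funext a b
  apply le_antisymm
  · exact iSup_le fun c => le_trans (mul_le_r hres (hle a c)) (htrans a c b)
  · exact le_rcomp_left hrefl ϕ a b

omit hres in lemma rscomp_absorb {A : Type*} {ϕ : A → A → L} {τ : A → L} (hrefl : IsRefl ϕ)
    (ht : rscomp ϕ τ ≤ τ) : rscomp ϕ τ = τ := by
  funext a
  refine le_antisymm (ht a) ?_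
  calc τ a = ϕ a a * τ a := by rw [hrefl a, one_mul]
    _ ≤ _ := le_iSup (fun b => ϕ a b * τ b) a

/-- Key relation identity: ϕ∘δx∘ϕ = φ∘δx∘ϕ. -/
lemma rel_key {A : Type*} {φ ϕ : A → A → L} {g : A → A → L}
    (hrefl₁ : IsRefl φ) (hrefl₂ : IsRefl ϕ) (htrans₂ : IsTrans ϕ)
    (hd₂ : rcomp ϕ g ≤ rcomp g ϕ) (hle : φ ≤ ϕ) :
    rcomp ϕ (rcomp g ϕ) = rcomp φ (rcomp g ϕ) := by
  apply le_antisymm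
  · calc rcomp ϕ (rcomp g ϕ) = rcomp (rcomp ϕ g) ϕ := (rcomp_assoc hres _ _ _).symm
      _ ≤ rcomp (rcomp g ϕ) ϕ := rcomp_mono hres hd₂ le_rfl
      _ = rcomp g (rcomp ϕ ϕ) := rcomp_assoc hres _ _ _
      _ = rcomp g ϕ := by rw [rcomp_absorb hres hrefl₂ htrans₂ le_rfl]
      _ ≤ rcomp φ (rcomp g ϕ) := le_rcomp_left hrefl₁ _
  · exact rcomp_mono hres hle le_rfl

lemma foldl_key {A X : Type*} (δ : X → A → A → L) {φ ϕ : A → A → L}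
    (hrefl₁ : IsRefl φ) (hrefl₂ : IsRefl ϕ) (htrans₂ : IsTrans ϕ)
    (hd₂ : ∀ x : X, rcomp ϕ (δ x) ≤ rcomp (δ x) ϕ) (hle : φ ≤ ϕ) :
    ∀ (u : List X) (f : A → L),
      List.foldl (fun g x => scomp (scomp g (δ x)) ϕ) (scomp f ϕ) u
      = scomp (List.foldl (fun g x => scomp (scomp g (δ x)) φ) (scomp f φ) u) ϕ := by
  intro u
  induction u with
  | nil =>
    intro f
    simp only [List.foldl_nil]
    rw [scomp_assoc hres, rcomp_absorb hres hrefl₁ htrans₂ hle]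
  | cons x u ih =>
    intro f
    simp only [List.foldl_cons]
    have h1 : scomp (scomp (scomp f ϕ) (δ x)) ϕ
        = scomp (scomp (scomp f φ) (δ x)) ϕ := by
      rw [scomp_assoc hres f ϕ (δ x), scomp_assoc hres f φ (δ x),
          scomp_assoc hres f (rcomp ϕ (δ x)) ϕ, scomp_assoc hres f (rcomp φ (δ x)) ϕ,
          rcomp_assoc hres, rcomp_assoc hres,
          rel_key hres hrefl₁ hrefl₂ htrans₂ (hd₂ x) hle]
    rw [h1]
    exact ih (scomp (scomp f φ) (δ x))


end Aux

/-- for right invariant fuzzy quasi-orders φ ≤ ϕ, the map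
ξ(φ_u) = ϕ_u is a well-defined surjective homomorphism of the cdfa A_φ onto
A_ϕ (preserving initial state, transitions and terminal membership);
in particular |A_ϕ| ≤ |A_φ|. -/
theorem stmt9 {L : Type*} [CompleteLattice L] [CommMonoid L] (res : L → L → L) (hres : ∀ x y z : L, x * y ≤ z ↔ x ≤ res y z) (htop : ∀ x : L, x ≤ 1)
    {A X : Type*} (σ : A → L) (δ : X → A → A → L) (τ : A → L)
    (φ ϕ : A → A → L)
    (hrefl₁ : IsRefl φ) (htrans₁ : IsTrans φ)
    (hd₁ : ∀ x : X, rcomp φ (δ x) ≤ rcomp (δ x) φ) (ht₁ : rscomp φ τ ≤ τ)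
    (hrefl₂ : IsRefl ϕ) (htrans₂ : IsTrans ϕ)
    (hd₂ : ∀ x : X, rcomp ϕ (δ x) ≤ rcomp (δ x) ϕ) (ht₂ : rscomp ϕ τ ≤ τ)
    (hle : φ ≤ ϕ) :
    ∃ ξ : {f : A → L // ∃ u : List X, f = phiFam σ δ φ u} →
          {f : A → L // ∃ u : List X, f = phiFam σ δ ϕ u},
      (∀ u : List X, (ξ ⟨phiFam σ δ φ u, u, rfl⟩).1 = phiFam σ δ ϕ u) ∧
      Function.Surjective ξ ∧
      (∀ s, sscomp (ξ s).1 τ = sscomp s.1 τ) ∧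
      Cardinal.mk {f : A → L // ∃ u : List X, f = phiFam σ δ ϕ u} ≤
        Cardinal.mk {f : A → L // ∃ u : List X, f = phiFam σ δ φ u} := by

  have key : ∀ u : List X, phiFam σ δ ϕ u = scomp (phiFam σ δ φ u) ϕ := fun u =>
    foldl_key hres δ hrefl₁ hrefl₂ htrans₂ hd₂ hle u σ
  let ξ : {f : A → L // ∃ u : List X, f = phiFam σ δ φ u} →
      {f : A → L // ∃ u : List X, f = phiFam σ δ ϕ u} := fun s =>
    ⟨scomp s.1 ϕ, by obtain ⟨u, hu⟩ := s.2; exact ⟨u, by rw [hu]; exact (key u).symm⟩⟩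
  have hsurj : Function.Surjective ξ := by
    intro t
    obtain ⟨u, hu⟩ := t.2
    refine ⟨⟨phiFam σ δ φ u, u, rfl⟩, Subtype.ext ?_⟩
    show scomp (phiFam σ δ φ u) ϕ = t.1
    rw [hu, key u]
  refine ⟨ξ, fun u => (key u).symm, hsurj, ?_, Cardinal.mk_le_of_surjective hsurj⟩
  intro s
  show sscomp (scomp s.1 ϕ) τ = sscomp s.1 τ
  rw [sscomp_scomp hres, rscomp_absorb hrefl₂ ht₂]
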